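/- arXiv:2507.14291 — 2 statements merged into one kernel-verified Lean document; each statement's English description precedes it below -/
import Mathlib

section
/- Let a ∈ ℂ with |a| < 1 and c ∈ ℂ with |c| = 1, ac ≠ 1. If Re[(1 - a²c² + c(1-|a|²))·(1-āc̄)²] = 0, then c = -(1-ā)/(1-a). -/
/-! On the unit circle `c̄ = c⁻¹`, so `z + z̄` for the product `z` in the hypothesis is a rational
function of `a, ā, c`, and it factors as `(1 - |a|²) c⁻¹ ((1 - a) c + (1 - ā))²`. As `|a| < 1`,
the vanishing of `Re z` forces the square to vanish, which is the claimed formula for `c`. -/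

open Complex ComplexConjugate

/-- With `b = ā` and `d = c̄` this is the product in the hypothesis. -/
def extremalExpr {R : Type*} [CommRing R] (a b c d : R) : R :=
  (1 - a ^ 2 * c ^ 2 + c * (1 - a * b)) * (1 - b * d) ^ 2

theorem conj_extremalExpr (a b c d : ℂ) :
    conj (extremalExpr a b c d) = extremalExpr (conj a) (conj b) (conj c) (conj d) := by
  simp only [extremalExpr, map_mul, map_sub, map_add, map_pow, map_one]

theorem extremalExpr_add_extremalExpr_swap {K : Type*} [Field K] {a b c d : K} (hcd : c * d = 1) :
    extremalExpr a b c d + extremalExpr b a d c = (1 - a * b) * d * ((1 - a) * c + (1 - b)) ^ 2 := by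
  have hc : c ≠ 0 := left_ne_zero_of_mul_eq_one hcd
  obtain rfl : d = c⁻¹ := eq_inv_of_mul_eq_one_right hcd
  simp only [extremalExpr]
  field_simp
  ring

theorem one_sub_ne_zero_of_norm_lt_one {a : ℂ} (ha : ‖a‖ < 1) : 1 - a ≠ 0 := by
  rw [sub_ne_zero]
  rintro rfl
  simp at ha

theorem one_sub_mul_conj_ne_zero_of_norm_lt_one {a : ℂ} (ha : ‖a‖ < 1) :
    1 - a * conj a ≠ 0 := by
  rw [mul_conj', sub_ne_zero, ← ofReal_pow, ← ofReal_one, ne_eq, ofReal_inj]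
  nlinarith [norm_nonneg a]

theorem extremal_c_formula_general
    (a c : ℂ) (ha : ‖a‖ < 1) (hc : ‖c‖ = 1)
    (hre : ((1 - a^2 * c^2 + c * (1 - (‖a‖:ℂ)^2)) *
      (1 - (starRingEnd ℂ) a * (starRingEnd ℂ) c)^2).re = 0) :
    c = -(1 - (starRingEnd ℂ) a) / (1 - a) := by
  have hcc : c * conj c = 1 := by rw [mul_conj', hc]; simp
  rw [← mul_conj'] at hre
  change (extremalExpr a (conj a) c (conj c)).re = 0 at hre
  have hsum := add_conj (extremalExpr a (conj a) c (conj c))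
  rw [hre, conj_extremalExpr, conj_conj, conj_conj, extremalExpr_add_extremalExpr_swap hcc] at hsum
  have hroot : (1 - a) * c + (1 - conj a) = 0 := by
    simpa [one_sub_mul_conj_ne_zero_of_norm_lt_one ha, left_ne_zero_of_mul_eq_one hcc] using hsum
  rw [eq_div_iff (one_sub_ne_zero_of_norm_lt_one ha)]
  linear_combination hroot

theorem extremal_c_formula
    (a c : ℂ) (ha : ‖a‖ < 1) (hc : ‖c‖ = 1) (hac : a * c ≠ 1)
    (hre : ((1 - a^2 * c^2 + c * (1 - (‖a‖:ℂ)^2)) *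
      (1 - (starRingEnd ℂ) a * (starRingEnd ℂ) c)^2).re = 0) :
    c = -(1 - (starRingEnd ℂ) a) / (1 - a) :=
  extremal_c_formula_general a c ha hc hre
end

section
/- Let f be holomorphic and injective on the unit disk with convex image, and let z₀ ∈ 𝔻. Then the Koebe transform g(z) = (f(σ(z)) - f(z₀)) / ((1-|z₀|²)f'(z₀)), where σ(z) = (z+z₀)/(1+z̄₀z), is holomorphic and injective on 𝔻 with convex image, g(0)=0, g'(0)=1, and its second Taylor coefficient equals b₂ = (1-|z₀|²)·f''(z₀)/(2f'(z₀)) - z̄₀. -/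
/-!
The map `σ = diskAut z₀` is an automorphism of the unit disk: the identity
`|1 + z̄₀z|² - |z + z₀|² = (1 - |z₀|²)(1 - |z|²)` shows that it maps the disk into itself, and
`diskAut (-z₀)` inverts it. Hence `g` is `f ∘ σ` followed by an affine map of `ℂ`, so holomorphy,
injectivity and convexity of the image pass from `f` to `g`. The normalisations at `0` follow from
the chain rule with `σ 0 = z₀`, `σ' 0 = 1 - |z₀|²` and `σ'' 0 = -2 z̄₀ (1 - |z₀|²)`.
-/

open Complex Metric ComplexConjugate Filter Topology

noncomputable def diskAut (a z : ℂ) : ℂ := (z + a) / (1 + conj a * z)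

@[simp] lemma diskAut_zero (a : ℂ) : diskAut a 0 = a := by simp [diskAut]

lemma normSq_one_add_conj_mul_sub_normSq_add (a z : ℂ) :
    normSq (1 + conj a * z) - normSq (z + a) = (1 - normSq a) * (1 - normSq z) := by
  simp only [normSq_apply, add_re, add_im, mul_re, mul_im, conj_re, conj_im, one_re, one_im]
  ring

lemma normSq_add_lt_normSq_one_add_conj_mul {a z : ℂ} (ha : ‖a‖ < 1) (hz : ‖z‖ < 1) :
    normSq (z + a) < normSq (1 + conj a * z) := by
  have ha' : normSq a < 1 := by rw [normSq_eq_norm_sq]; nlinarith [norm_nonneg a]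
  have hz' : normSq z < 1 := by rw [normSq_eq_norm_sq]; nlinarith [norm_nonneg z]
  nlinarith [normSq_one_add_conj_mul_sub_normSq_add a z]

lemma one_add_conj_mul_ne_zero {a z : ℂ} (ha : ‖a‖ < 1) (hz : ‖z‖ < 1) :
    1 + conj a * z ≠ 0 := by
  rw [← normSq_pos]
  exact (normSq_nonneg _).trans_lt (normSq_add_lt_normSq_one_add_conj_mul ha hz)

lemma norm_diskAut_lt_one {a z : ℂ} (ha : ‖a‖ < 1) (hz : ‖z‖ < 1) : ‖diskAut a z‖ < 1 := by
  have h := normSq_add_lt_normSq_one_add_conj_mul ha hz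
  rw [← Complex.sq_norm, ← Complex.sq_norm] at h
  rw [diskAut, norm_div, div_lt_one (norm_pos_iff.mpr (one_add_conj_mul_ne_zero ha hz))]
  exact lt_of_pow_lt_pow_left₀ 2 (norm_nonneg _) h

lemma one_sub_norm_sq_ne_zero {a : ℂ} (ha : ‖a‖ < 1) : 1 - (‖a‖ : ℂ) ^ 2 ≠ 0 := by
  rw [← ofReal_pow, ← ofReal_one, ← ofReal_sub, ofReal_ne_zero]
  nlinarith [norm_nonneg a]

lemma diskAut_neg_diskAut {a z : ℂ} (ha : ‖a‖ < 1) (hz : ‖z‖ < 1) :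
    diskAut (-a) (diskAut a z) = z := by
  have hden := one_add_conj_mul_ne_zero ha hz
  have hr : 1 - conj a * a ≠ 0 := conj_mul' a ▸ one_sub_norm_sq_ne_zero ha
  have hnum : (z + a) / (1 + conj a * z) + -a = z * (1 - conj a * a) / (1 + conj a * z) := by
    rw [eq_div_iff hden, add_mul, div_mul_cancel₀ _ hden]; ring
  have hden' : 1 + conj (-a) * ((z + a) / (1 + conj a * z)) =
      (1 - conj a * a) / (1 + conj a * z) := by
    rw [map_neg, eq_div_iff hden, add_mul, neg_mul, neg_mul, mul_assoc, div_mul_cancel₀ _ hden]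
    ring
  rw [diskAut, diskAut, hnum, hden', div_div_div_cancel_right₀ hden, mul_div_cancel_right₀ _ hr]

lemma mapsTo_diskAut {a : ℂ} (ha : ‖a‖ < 1) : Set.MapsTo (diskAut a) (ball 0 1) (ball 0 1) :=
  fun _ hz => mem_ball_zero_iff.mpr (norm_diskAut_lt_one ha (mem_ball_zero_iff.mp hz))

lemma leftInvOn_diskAut_neg {a : ℂ} (ha : ‖a‖ < 1) :
    Set.LeftInvOn (diskAut (-a)) (diskAut a) (ball 0 1) :=
  fun _ hz => diskAut_neg_diskAut ha (mem_ball_zero_iff.mp hz)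

lemma bijOn_diskAut {a : ℂ} (ha : ‖a‖ < 1) : Set.BijOn (diskAut a) (ball 0 1) (ball 0 1) := by
  have ha' : ‖-a‖ < 1 := by rwa [norm_neg]
  have hright : Set.LeftInvOn (diskAut a) (diskAut (-a)) (ball 0 1) := by
    simpa only [neg_neg] using leftInvOn_diskAut_neg ha'
  exact Set.InvOn.bijOn ⟨leftInvOn_diskAut_neg ha, hright⟩ (mapsTo_diskAut ha) (mapsTo_diskAut ha')

lemma hasDerivAt_diskAut (a : ℂ) {z : ℂ} (hz : 1 + conj a * z ≠ 0) :
    HasDerivAt (diskAut a) ((1 - (‖a‖ : ℂ) ^ 2) / (1 + conj a * z) ^ 2) z := by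
  have h := ((hasDerivAt_id' z).add_const a).fun_div
    (((hasDerivAt_id' z).const_mul (conj a)).const_add 1) hz
  refine h.congr_deriv ?_
  rw [← conj_mul']
  ring

lemma Convex.image_sub_div {s : Set ℂ} (hs : Convex ℝ s) (b c : ℂ) :
    Convex ℝ ((fun w => (w - b) / c) '' s) := by
  have h := (hs.translate (-b)).linear_image (LinearMap.mul ℝ ℂ c⁻¹)
  rw [Set.image_image] at h
  have hfun : (fun w => LinearMap.mul ℝ ℂ c⁻¹ (-b + w)) = fun w => (w - b) / c := by
    funext w
    rw [LinearMap.mul_apply', div_eq_inv_mul, sub_eq_neg_add]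
  rwa [hfun] at h

noncomputable def koebeTransform (f : ℂ → ℂ) (a z : ℂ) : ℂ :=
  (f (diskAut a z) - f a) / ((1 - (‖a‖ : ℂ) ^ 2) * deriv f a)

section koebeTransform

variable {f : ℂ → ℂ} {a : ℂ}

@[simp] lemma koebeTransform_zero (f : ℂ → ℂ) (a : ℂ) : koebeTransform f a 0 = 0 := by
  simp [koebeTransform]

lemma hasDerivAt_koebeTransform {z : ℂ} (hf : DifferentiableAt ℂ f (diskAut a z))
    (hz : 1 + conj a * z ≠ 0) :
    HasDerivAt (koebeTransform f a) (deriv f (diskAut a z) *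
      ((1 - (‖a‖ : ℂ) ^ 2) / (1 + conj a * z) ^ 2) / ((1 - (‖a‖ : ℂ) ^ 2) * deriv f a)) z :=
  ((hf.hasDerivAt.comp z (hasDerivAt_diskAut a hz)).sub_const (f a)).div_const _

lemma differentiableOn_koebeTransform (hf : DifferentiableOn ℂ f (ball 0 1)) (ha : ‖a‖ < 1) :
    DifferentiableOn ℂ (koebeTransform f a) (ball 0 1) := fun _ hz =>
  (hasDerivAt_koebeTransform
    (hf.differentiableAt (isOpen_ball.mem_nhds ((bijOn_diskAut ha).mapsTo hz)))
    (one_add_conj_mul_ne_zero ha (mem_ball_zero_iff.mp hz))).differentiableAt.differentiableWithinAt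

lemma injOn_koebeTransform (hf : Set.InjOn f (ball 0 1)) (hf' : deriv f a ≠ 0) (ha : ‖a‖ < 1) :
    Set.InjOn (koebeTransform f a) (ball 0 1) := by
  intro z hz w hw h
  have hc := mul_ne_zero (one_sub_norm_sq_ne_zero ha) hf'
  have hσ := bijOn_diskAut ha
  refine hσ.injOn hz hw (hf (hσ.mapsTo hz) (hσ.mapsTo hw) ?_)
  simpa only [koebeTransform, div_left_inj' hc, sub_left_inj] using h

lemma image_koebeTransform_ball (ha : ‖a‖ < 1) :
    koebeTransform f a '' ball 0 1 =
      (fun w => (w - f a) / ((1 - (‖a‖ : ℂ) ^ 2) * deriv f a)) '' (f '' ball 0 1) := by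
  conv_rhs => rw [← (bijOn_diskAut ha).image_eq, Set.image_image, Set.image_image]
  rfl

lemma convex_image_koebeTransform (hf : Convex ℝ (f '' ball 0 1)) (ha : ‖a‖ < 1) :
    Convex ℝ (koebeTransform f a '' ball 0 1) :=
  image_koebeTransform_ball ha ▸ hf.image_sub_div _ _

lemma deriv_koebeTransform_zero (hf : DifferentiableAt ℂ f a) (hf' : deriv f a ≠ 0)
    (ha : ‖a‖ < 1) : deriv (koebeTransform f a) 0 = 1 := by
  rw [(hasDerivAt_koebeTransform (by simpa using hf) (by simp)).deriv]
  simp only [diskAut_zero, mul_zero, add_zero, one_pow, div_one]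
  rw [mul_comm]
  exact div_self (mul_ne_zero (one_sub_norm_sq_ne_zero ha) hf')

lemma deriv_deriv_koebeTransform_zero (hf : AnalyticAt ℂ f a) (hf' : deriv f a ≠ 0)
    (ha : ‖a‖ < 1) :
    deriv (deriv (koebeTransform f a)) 0 / 2 =
      (1 - (‖a‖ : ℂ) ^ 2) * deriv (deriv f) a / (2 * deriv f a) - conj a := by
  set r : ℂ := 1 - (‖a‖ : ℂ) ^ 2
  have hσ : HasDerivAt (diskAut a) r 0 := by simpa using hasDerivAt_diskAut a (z := 0) (by simp)
  have hderiv_eq : deriv (koebeTransform f a) =ᶠ[𝓝 0]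
      fun z => deriv f (diskAut a z) * (r / (1 + conj a * z) ^ 2) / (r * deriv f a) := by
    have hf_near : ∀ᶠ z in 𝓝 0, DifferentiableAt ℂ f (diskAut a z) := by
      have hσ_tendsto := hσ.continuousAt.tendsto
      rw [diskAut_zero] at hσ_tendsto
      exact (hσ_tendsto.eventually hf.eventually_analyticAt).mono fun z hz => hz.differentiableAt
    have hden_near : ∀ᶠ z in 𝓝 (0 : ℂ), 1 + conj a * z ≠ 0 :=
      eventually_of_mem (ball_mem_nhds 0 one_pos) fun z hz =>
        one_add_conj_mul_ne_zero ha (mem_ball_zero_iff.mp hz)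
    filter_upwards [hf_near, hden_near] with z hfz hz
    exact (hasDerivAt_koebeTransform hfz hz).deriv
  have hσ' : HasDerivAt (fun z => r / (1 + conj a * z) ^ 2) (-(r * (2 * conj a))) 0 := by
    have hq : HasDerivAt (fun z => (1 + conj a * z) ^ 2) (2 * conj a) 0 := by
      simpa using (((hasDerivAt_id' (0 : ℂ)).const_mul (conj a)).const_add 1).fun_pow 2
    simpa using (hasDerivAt_const (0 : ℂ) r).fun_div hq (by simp)
  have hf'σ : HasDerivAt (fun z => deriv f (diskAut a z)) (deriv (deriv f) a * r) 0 :=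
    hf.deriv.differentiableAt.hasDerivAt.comp_of_eq 0 hσ (diskAut_zero a).symm
  have hr0 : r ≠ 0 := one_sub_norm_sq_ne_zero ha
  rw [hderiv_eq.deriv_eq, ((hf'σ.fun_mul hσ').div_const _).deriv]
  simp only [mul_zero, add_zero, one_pow, div_one, diskAut_zero, mul_neg]
  field_simp
  ring

end koebeTransform

theorem koebe_transform_properties
    (f : ℂ → ℂ)
    (hdiff : DifferentiableOn ℂ f (ball (0:ℂ) 1))
    (hinj : Set.InjOn f (ball (0:ℂ) 1))
    (hconv : Convex ℝ (f '' ball (0:ℂ) 1))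
    (hder : ∀ z ∈ ball (0:ℂ) 1, deriv f z ≠ 0)
    (z₀ : ℂ) (hz₀ : z₀ ∈ ball (0:ℂ) 1)
    (σ g : ℂ → ℂ)
    (hσ : σ = fun z => (z + z₀) / (1 + (starRingEnd ℂ) z₀ * z))
    (hg : g = fun z => (f (σ z) - f z₀) / ((1 - (‖z₀‖:ℂ)^2) * deriv f z₀)) :
    DifferentiableOn ℂ g (ball (0:ℂ) 1) ∧
    Set.InjOn g (ball (0:ℂ) 1) ∧
    Convex ℝ (g '' ball (0:ℂ) 1) ∧
    g 0 = 0 ∧ deriv g 0 = 1 ∧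
    deriv (deriv g) 0 / 2 =
      (1 - (‖z₀‖:ℂ)^2) * deriv (deriv f) z₀ / (2 * deriv f z₀) - (starRingEnd ℂ) z₀ := by
  obtain rfl : g = koebeTransform f z₀ := by subst hσ hg; rfl
  have hz₀' : ‖z₀‖ < 1 := mem_ball_zero_iff.mp hz₀
  have hf_analytic : AnalyticAt ℂ f z₀ := hdiff.analyticAt (isOpen_ball.mem_nhds hz₀)
  exact ⟨differentiableOn_koebeTransform hdiff hz₀', injOn_koebeTransform hinj (hder z₀ hz₀) hz₀',
    convex_image_koebeTransform hconv hz₀', koebeTransform_zero f z₀,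
    deriv_koebeTransform_zero hf_analytic.differentiableAt (hder z₀ hz₀) hz₀',
    deriv_deriv_koebeTransform_zero hf_analytic (hder z₀ hz₀) hz₀'⟩
end
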